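/- Suppose K satisfies X = (A+BK)X(A+BK)ᵀ + I for some X ⪰ I with Tr(X) ≤ κ²d_x/γ and Tr(KXKᵀ) ≤ κ⁴d_x/γ. Then the block matrix Σ = [[X, XKᵀ],[KX, KXKᵀ]] is positive semidefinite, satisfies Σ_xx = (A B)Σ(A B)ᵀ + I, and Tr(Σ) ≤ 2κ⁴d_x/γ (using κ ≥ 1), i.e., the SDP with trace bound ν = 2κ⁴d_x/γ is feasible. -/

import Mathlib

open scoped Matrix.Norms.L2Operator
open scoped Matrix

/-!
Writing `L = [I; K]`, the block matrix is `Σ = L X Lᵀ`, so it is positive semidefinite with `X`,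
and `(A B) L = A + B K` turns the closed-loop Lyapunov equation into `Σ_xx = (A B) Σ (A B)ᵀ + I`.
Its trace is `Tr X + Tr (K X Kᵀ) ≤ (κ² + κ⁴) d_x / γ ≤ 2 κ⁴ d_x / γ`.
-/

namespace Matrix

variable {m n p R : Type*} [Fintype n]

theorem trace_fromBlocks [Fintype m] [AddCommMonoid R] (A : Matrix n n R) (B : Matrix n m R)
    (C : Matrix m n R) (D : Matrix m m R) :
    (fromBlocks A B C D).trace = A.trace + D.trace := by
  simp only [trace, diag, Fintype.sum_sum_type, fromBlocks_apply₁₁, fromBlocks_apply₂₂]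

variable [DecidableEq n] [Semiring R]

theorem fromBlocks_eq_fromRows_one_mul_mul_transpose (X : Matrix n n R) (K : Matrix m n R) :
    fromBlocks X (X * Kᵀ) (K * X) (K * X * Kᵀ) =
      fromRows (1 : Matrix n n R) K * X * (fromRows (1 : Matrix n n R) K)ᵀ := by
  rw [transpose_fromRows, fromRows_mul, fromRows_mul_fromCols]
  simp only [Matrix.one_mul, Matrix.mul_one, transpose_one]

theorem fromCols_mul_fromRows_one [Fintype m] (A : Matrix p n R) (B : Matrix p m R)
    (K : Matrix m n R) :
    fromCols A B * fromRows (1 : Matrix n n R) K = A + B * K := by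
  rw [fromCols_mul_fromRows, Matrix.mul_one]

end Matrix

open Matrix in
theorem stmt12_general {dx du : ℕ} (A : Matrix (Fin dx) (Fin dx) ℝ)
    (B : Matrix (Fin dx) (Fin du) ℝ) (K : Matrix (Fin du) (Fin dx) ℝ)
    (X : Matrix (Fin dx) (Fin dx) ℝ) (κ γ : ℝ)
    (hκ : 1 ≤ κ) (hγ0 : 0 < γ)
    (hXpsd : X.PosSemidef)
    (hX : X = (A + B * K) * X * (A + B * K)ᵀ + 1)
    (htrX : X.trace ≤ κ ^ 2 * dx / γ)
    (htrKXK : (K * X * Kᵀ).trace ≤ κ ^ 4 * dx / γ) :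
    (Matrix.fromBlocks X (X * Kᵀ) (K * X) (K * X * Kᵀ)).PosSemidef ∧
    X = Matrix.fromCols A B * Matrix.fromBlocks X (X * Kᵀ) (K * X) (K * X * Kᵀ) *
          (Matrix.fromCols A B)ᵀ + 1 ∧
    (Matrix.fromBlocks X (X * Kᵀ) (K * X) (K * X * Kᵀ)).trace ≤ 2 * κ ^ 4 * dx / γ := by
  have hblock := fromBlocks_eq_fromRows_one_mul_mul_transpose X K
  refine ⟨hblock ▸ hXpsd.mul_mul_conjTranspose_same _, ?_, ?_⟩
  · rw [hblock]
    rw [← fromCols_mul_fromRows_one A B K] at hX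
    simpa only [transpose_mul, Matrix.mul_assoc] using hX
  · have hκ_sq : κ ^ 2 * dx / γ ≤ κ ^ 4 * dx / γ := by
      gcongr
      norm_num
    calc (fromBlocks X (X * Kᵀ) (K * X) (K * X * Kᵀ)).trace
        = X.trace + (K * X * Kᵀ).trace := trace_fromBlocks _ _ _ _
      _ ≤ κ ^ 4 * dx / γ + κ ^ 4 * dx / γ := add_le_add (htrX.trans hκ_sq) htrKXK
      _ = 2 * κ ^ 4 * dx / γ := by ring

theorem stmt12 {dx du : ℕ} (A : Matrix (Fin dx) (Fin dx) ℝ)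
    (B : Matrix (Fin dx) (Fin du) ℝ) (K : Matrix (Fin du) (Fin dx) ℝ)
    (X : Matrix (Fin dx) (Fin dx) ℝ) (κ γ : ℝ)
    (hκ : 1 ≤ κ) (hγ0 : 0 < γ) (hγ1 : γ < 1)
    (hXpsd : X.PosSemidef) (hXI : (X - 1).PosSemidef)
    (hX : X = (A + B * K) * X * (A + B * K)ᵀ + 1)
    (htrX : X.trace ≤ κ ^ 2 * dx / γ)
    (htrKXK : (K * X * Kᵀ).trace ≤ κ ^ 4 * dx / γ) :
    (Matrix.fromBlocks X (X * Kᵀ) (K * X) (K * X * Kᵀ)).PosSemidef ∧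
    X = Matrix.fromCols A B * Matrix.fromBlocks X (X * Kᵀ) (K * X) (K * X * Kᵀ) *
          (Matrix.fromCols A B)ᵀ + 1 ∧
    (Matrix.fromBlocks X (X * Kᵀ) (K * X) (K * X * Kᵀ)).trace ≤ 2 * κ ^ 4 * dx / γ :=
  stmt12_general A B K X κ γ hκ hγ0 hXpsd hX htrX htrKXK
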